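/- For every β ≥ 0 and all reals x₁ ≤ x₂, one has F_β(x₂) − F_β(x₁) ≤ tanh(β)·(x₂ − x₁); i.e. F_β is Lipschitz with constant tanh(β). -/

import Mathlib

noncomputable def artanh (x : ℝ) : ℝ := Real.log ((1 + x) / (1 - x)) / 2

noncomputable def F (β x : ℝ) : ℝ := artanh (Real.tanh β * Real.tanh x)

/-! With `t = tanh β ∈ [0, 1)` and `u = tanh x`, the derivative `t (1 - u²) / (1 - t²u²)` of
`F β` is at most `t` because `t²u² ≤ u²`; the mean value theorem turns this into the bound. -/

open Real hiding artanh

theorem Real.tanh_nonneg {x : ℝ} (hx : 0 ≤ x) : 0 ≤ tanh x := by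
  rw [tanh_eq_sinh_div_cosh]
  exact div_nonneg (sinh_nonneg_iff.2 hx) (cosh_pos x).le

theorem Real.hasDerivAt_tanh (x : ℝ) : HasDerivAt tanh (1 - tanh x ^ 2) x := by
  have hcosh := (cosh_pos x).ne'
  have hderiv : 1 - tanh x ^ 2 = (cosh x * cosh x - sinh x * sinh x) / cosh x ^ 2 := by
    rw [tanh_eq_sinh_div_cosh]
    field_simp
  rw [hderiv, funext tanh_eq_sinh_div_cosh]
  exact (hasDerivAt_sinh x).div (hasDerivAt_cosh x) hcosh

theorem hasDerivAt_artanh {y : ℝ} (hy : |y| < 1) : HasDerivAt artanh (1 / (1 - y ^ 2)) y := by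
  obtain ⟨hy₁, hy₂⟩ := abs_lt.1 hy
  have hplus : 1 + y ≠ 0 := by linarith
  have hminus : 1 - y ≠ 0 := by linarith
  have hden : 1 - y ^ 2 ≠ 0 := by nlinarith
  have hquot := ((hasDerivAt_id y).const_add 1).div ((hasDerivAt_id y).const_sub 1) hminus
  refine ((hquot.log (div_ne_zero hplus hminus)).div_const 2).congr_deriv ?_
  simp only [Pi.div_apply, id]
  field_simp
  ring

theorem hasDerivAt_F (β x : ℝ) :
    HasDerivAt (F β) (tanh β * (1 - tanh x ^ 2) / (1 - (tanh β * tanh x) ^ 2)) x := by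
  have hlt : |tanh β * tanh x| < 1 := by
    rw [abs_mul]
    exact mul_lt_one_of_nonneg_of_lt_one_left (abs_nonneg _) (abs_tanh_lt_one β)
      (abs_tanh_lt_one x).le
  refine ((hasDerivAt_artanh hlt).comp x
    ((hasDerivAt_tanh x).const_mul (tanh β))).congr_deriv ?_
  ring

theorem deriv_F_le {β : ℝ} (hβ : 0 ≤ β) (x : ℝ) : deriv (F β) x ≤ tanh β := by
  set t := tanh β
  set u := tanh x
  have ht : 0 ≤ t := tanh_nonneg hβ
  have ht_sq : t ^ 2 < 1 := tanh_sq_lt_one β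
  have hu_sq : u ^ 2 < 1 := tanh_sq_lt_one x
  have hden : 0 < 1 - (t * u) ^ 2 := by nlinarith
  rw [(hasDerivAt_F β x).deriv, div_le_iff₀ hden]
  linarith [mul_nonneg ht (mul_nonneg (sq_nonneg u) (sub_nonneg.2 ht_sq.le))]

theorem stmt_2 (β : ℝ) (hβ : 0 ≤ β) (x₁ x₂ : ℝ) (hx : x₁ ≤ x₂) :
    F β x₂ - F β x₁ ≤ Real.tanh β * (x₂ - x₁) :=
  image_sub_le_mul_sub_of_deriv_le (fun x => (hasDerivAt_F β x).differentiableAt)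
    (deriv_F_le hβ) hx
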